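/- For all n ≥ 1 the exponential moment satisfies E[exp(W_1^{(n)})] ≤ e², and consequently E[(W_1^{(n)})^k] ≤ k!·e² for all integers k ≥ 1. -/

import Mathlib

/-!
With `N_i = L^(id) - L^((i-1)d)` and `p_i = p⁻_{L^i}`, each `X_i` is binomial, so
`E[e^(X_i)] = (1 + (e - 1) p_i)^(N_i) ≤ exp((e - 1) N_i p_i)`, and independence gives
`E[e^W] ≤ exp((e - 1) ∑ N_i p_i)`. Since `p⁻ ≤ 1 - exp(-ρ/ζ_n)`, the defining equation of `ζ_n`
bounds `∑ N_i p_i` by `(L^(nd) - 1) - (L^(nd) - 2) = 1`, so `E[e^W] ≤ e^(e-1) ≤ e²`.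
The moment bounds follow from `x^k ≤ k! e^x`.
-/

open MeasureTheory ProbabilityTheory Filter Finset
open scoped ENNReal Classical

noncomputable section

/-- The hierarchical lattice `H^d_L`: the direct sum of countably many copies of `(ZMod L)^d`. -/
abbrev HLat (d L : ℕ) : Type := ℕ →₀ (Fin d → ZMod L)

/-- `hnorm x = 0` if `x = 0`, and `hnorm x = L^(i+1)` if `x i ≠ 0` and `x j = 0` for `j > i`
(coordinates indexed from `0`, matching the paper's indexing from `1`). -/
def hnorm {d L : ℕ} (x : HLat d L) : ℕ :=
  x.support.sup fun i => L ^ (i + 1)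

/-- The ball `Λ_n = {x : ‖x‖ ≤ L^n}`. -/
def Lambda (d L n : ℕ) : Set (HLat d L) := {x | hnorm x ≤ L ^ n}

/-- The defining equation for `ζ_n`:
`(L^d - 1) · ∑_{i=1}^n L^((i-1)d) exp(-z⁻¹ ρ(L^i)) = L^(nd) - 2`. -/
def zetaEq (d L : ℕ) (ρ : ℝ → ℝ) (n : ℕ) (z : ℝ) : Prop :=
  ((L : ℝ) ^ d - 1) *
      ∑ i ∈ Finset.Icc 1 n, (L : ℝ) ^ ((i - 1) * d) * Real.exp (-z⁻¹ * ρ ((L : ℝ) ^ i))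
    = (L : ℝ) ^ (n * d) - 2

/-- `ρ⁻(r) = max{ρ(r) - L^(-nθ), 0}`. -/
def rhoMinus (L : ℕ) (θ : ℝ) (ρ : ℝ → ℝ) (n : ℕ) (r : ℝ) : ℝ :=
  max (ρ r - (L : ℝ) ^ (-(n : ℝ) * θ)) 0

/-- `p⁻_r = 1 - exp(-ζ_n⁻¹ ρ⁻(r))`. -/
def pMinus (L : ℕ) (θ : ℝ) (ρ : ℝ → ℝ) (ζ : ℕ → ℝ) (n : ℕ) (r : ℝ) : ℝ :=
  1 - Real.exp (-(ζ n)⁻¹ * rhoMinus L θ ρ n r)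

/-- `m_j^{(n)} = (L^d - 1) · ∑_{i=1}^j L^((i-1)d) p⁻_{L^i}`. -/
def mjn (d L : ℕ) (θ : ℝ) (ρ : ℝ → ℝ) (ζ : ℕ → ℝ) (n j : ℕ) : ℝ :=
  ((L : ℝ) ^ d - 1) *
    ∑ i ∈ Finset.Icc 1 j, (L : ℝ) ^ ((i - 1) * d) * pMinus L θ ρ ζ n ((L : ℝ) ^ i)

section Binomial

variable {Ω : Type*} [MeasurableSpace Ω]

def IsBinomial (P : Measure Ω) (X : Ω → ℕ) (N : ℕ) (p : ℝ) : Prop :=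
  ∀ k : ℕ, P {ω | X ω = k} = ENNReal.ofReal ((N.choose k : ℝ) * p ^ k * (1 - p) ^ (N - k))

theorem IsBinomial.lintegral_exp_mul {P : Measure Ω} {X : Ω → ℕ} {N : ℕ} {p : ℝ}
    (hX : Measurable X) (hbin : IsBinomial P X N p) (hp0 : 0 ≤ p) (hp1 : p ≤ 1) (t : ℝ) :
    ∫⁻ ω, ENNReal.ofReal (Real.exp (t * X ω)) ∂P =
      ENNReal.ofReal ((Real.exp t * p + (1 - p)) ^ N) := by
  have hterm_nonneg : ∀ k : ℕ,
      0 ≤ Real.exp (t * k) * ((N.choose k : ℝ) * p ^ k * (1 - p) ^ (N - k)) := fun k => by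
    have : 0 ≤ 1 - p := by linarith
    positivity
  calc ∫⁻ ω, ENNReal.ofReal (Real.exp (t * X ω)) ∂P
      = ∫⁻ k, ENNReal.ofReal (Real.exp (t * k)) ∂(P.map X) :=
        (lintegral_map (f := fun k : ℕ => ENNReal.ofReal (Real.exp (t * k)))
          measurable_from_nat hX).symm
    _ = ∑' k : ℕ, ENNReal.ofReal
          (Real.exp (t * k) * ((N.choose k : ℝ) * p ^ k * (1 - p) ^ (N - k))) := by
        rw [lintegral_countable']
        refine tsum_congr fun k => ?_
        rw [Measure.map_apply hX (measurableSet_singleton k),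
          ENNReal.ofReal_mul (Real.exp_nonneg _)]
        exact congrArg _ (hbin k)
    _ = ∑ k ∈ range (N + 1), ENNReal.ofReal
          (Real.exp (t * k) * ((N.choose k : ℝ) * p ^ k * (1 - p) ^ (N - k))) := by
        refine tsum_eq_sum fun k hk => ?_
        simp [Nat.choose_eq_zero_of_lt (by simpa using hk : N < k)]
    _ = ENNReal.ofReal ((Real.exp t * p + (1 - p)) ^ N) := by
        rw [← ENNReal.ofReal_sum_of_nonneg fun k _ => hterm_nonneg k, add_pow]
        congr 1
        refine sum_congr rfl fun k _ => ?_
        rw [mul_comm t, Real.exp_nat_mul]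
        ring

theorem IsBinomial.lintegral_exp_le {P : Measure Ω} {X : Ω → ℕ} {N : ℕ} {p : ℝ}
    (hX : Measurable X) (hbin : IsBinomial P X N p) (hp0 : 0 ≤ p) (hp1 : p ≤ 1) :
    ∫⁻ ω, ENNReal.ofReal (Real.exp (X ω)) ∂P ≤
      ENNReal.ofReal (Real.exp ((Real.exp 1 - 1) * (N * p))) := by
  have h := hbin.lintegral_exp_mul hX hp0 hp1 1
  simp only [one_mul] at h
  rw [h]
  refine ENNReal.ofReal_le_ofReal ?_
  have hbase : 0 ≤ 1 + (Real.exp 1 - 1) * p := by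
    nlinarith [Real.add_one_le_exp (1 : ℝ)]
  calc (Real.exp 1 * p + (1 - p)) ^ N = (1 + (Real.exp 1 - 1) * p) ^ N := by ring
    _ ≤ Real.exp ((Real.exp 1 - 1) * p) ^ N := by
        gcongr
        linarith [Real.add_one_le_exp ((Real.exp 1 - 1) * p)]
    _ = Real.exp ((Real.exp 1 - 1) * (N * p)) := by
        rw [← Real.exp_nat_mul]
        ring_nf

theorem lintegral_exp_sum_le_of_iIndepFun_isBinomial {ι : Type*} {P : Measure Ω}
    {X : ι → Ω → ℕ} (hXmeas : ∀ i, Measurable (X i)) (hXindep : iIndepFun X P)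
    (s : Finset ι) {N : ι → ℕ} {p : ι → ℝ} (hbin : ∀ i ∈ s, IsBinomial P (X i) (N i) (p i))
    (hp0 : ∀ i ∈ s, 0 ≤ p i) (hp1 : ∀ i ∈ s, p i ≤ 1) :
    ∫⁻ ω, ENNReal.ofReal (Real.exp ((∑ i ∈ s, X i ω : ℕ) : ℝ)) ∂P ≤
      ENNReal.ofReal (Real.exp ((Real.exp 1 - 1) * ∑ i ∈ s, N i * p i)) := by
  let g : ℕ → ℝ≥0∞ := fun m => ENNReal.ofReal (Real.exp m)
  have hprod : ∀ ω, ENNReal.ofReal (Real.exp ((∑ i ∈ s, X i ω : ℕ) : ℝ)) =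
      ∏ i ∈ s, g (X i ω) := fun ω => by
    rw [Nat.cast_sum, Real.exp_sum, ENNReal.ofReal_prod_of_nonneg fun i _ => Real.exp_nonneg _]
  simp_rw [hprod]
  calc ∫⁻ ω, ∏ i ∈ s, g (X i ω) ∂P = ∏ i ∈ s, ∫⁻ ω, g (X i ω) ∂P :=
        lintegral_prod_eq_prod_lintegral_of_indepFun s _
          (hXindep.comp (fun _ => g) fun _ => measurable_from_nat)
          fun i => (measurable_from_nat (f := g)).comp (hXmeas i)
    _ ≤ ∏ i ∈ s, ENNReal.ofReal (Real.exp ((Real.exp 1 - 1) * (N i * p i))) :=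
        prod_le_prod' fun i hi => (hbin i hi).lintegral_exp_le (hXmeas i) (hp0 i hi) (hp1 i hi)
    _ = ENNReal.ofReal (Real.exp ((Real.exp 1 - 1) * ∑ i ∈ s, N i * p i)) := by
        rw [← ENNReal.ofReal_prod_of_nonneg fun i _ => Real.exp_nonneg _, ← Real.exp_sum,
          mul_sum]

end Binomial

theorem lintegral_natCast_pow_le_factorial_mul_lintegral_exp {Ω : Type*} [MeasurableSpace Ω]
    (P : Measure Ω) (W : Ω → ℕ) (k : ℕ) :
    ∫⁻ ω, (W ω : ℝ≥0∞) ^ k ∂P ≤ k.factorial * ∫⁻ ω, ENNReal.ofReal (Real.exp (W ω)) ∂P := by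
  rw [← lintegral_const_mul' _ _ (ENNReal.natCast_ne_top _)]
  refine lintegral_mono fun ω => ?_
  have hreal : (W ω : ℝ) ^ k ≤ k.factorial * Real.exp (W ω) := by
    have h := Real.pow_div_factorial_le_exp _ (Nat.cast_nonneg (W ω)) k
    rwa [div_le_iff₀ (by positivity), mul_comm] at h
  calc (W ω : ℝ≥0∞) ^ k = ENNReal.ofReal ((W ω : ℝ) ^ k) := by
        rw [ENNReal.ofReal_pow (Nat.cast_nonneg _), ENNReal.ofReal_natCast]
    _ ≤ ENNReal.ofReal (k.factorial * Real.exp (W ω)) := ENNReal.ofReal_le_ofReal hreal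
    _ = k.factorial * ENNReal.ofReal (Real.exp (W ω)) := by
        rw [ENNReal.ofReal_mul (by positivity), ENNReal.ofReal_natCast]

theorem sum_Icc_sub_one_mul_pow_pred {R : Type*} [CommRing R] (x : R) (n : ℕ) :
    ∑ i ∈ Icc 1 n, (x - 1) * x ^ (i - 1) = x ^ n - 1 := by
  rw [← geom_sum_mul, sum_mul, ← Ico_add_one_right_eq_Icc, sum_Ico_eq_sum_range]
  simp [mul_comm]

theorem natCast_pow_sub_pow_pred {L : ℕ} (hL : 1 ≤ L) (d : ℕ) {i : ℕ} (hi : 1 ≤ i) :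
    ((L ^ (i * d) - L ^ ((i - 1) * d) : ℕ) : ℝ) = ((L : ℝ) ^ d - 1) * (L : ℝ) ^ ((i - 1) * d) := by
  obtain ⟨j, rfl⟩ := Nat.exists_eq_add_of_le' hi
  rw [Nat.cast_sub (Nat.pow_le_pow_right hL (by gcongr; omega))]
  simp only [Nat.add_sub_cancel, add_mul, one_mul, pow_add, Nat.cast_pow, Nat.cast_mul]
  ring

theorem zetaEq.sum_shell_mul_one_sub_exp {d L : ℕ} (hL : 1 ≤ L) {ρ : ℝ → ℝ} {n : ℕ} {z : ℝ}
    (hz : zetaEq d L ρ n z) :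
    ∑ i ∈ Icc 1 n, ((L ^ (i * d) - L ^ ((i - 1) * d) : ℕ) : ℝ) *
      (1 - Real.exp (-z⁻¹ * ρ ((L : ℝ) ^ i))) = 1 := by
  have htel := sum_Icc_sub_one_mul_pow_pred ((L : ℝ) ^ d) n
  simp only [← pow_mul, mul_comm d] at htel
  rw [zetaEq, mul_sum] at hz
  rw [sum_congr rfl fun i hi => by rw [natCast_pow_sub_pow_pred hL d (mem_Icc.1 hi).1]]
  simp only [mul_sub, mul_one, sum_sub_distrib, htel, mul_assoc, hz]
  ring

section pMinus

variable {L : ℕ} {θ : ℝ} {ρ : ℝ → ℝ} {ζ : ℕ → ℝ} {n : ℕ} {r : ℝ}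

theorem rhoMinus_nonneg : 0 ≤ rhoMinus L θ ρ n r := le_max_right _ _

theorem rhoMinus_le (hρ : 0 ≤ ρ r) : rhoMinus L θ ρ n r ≤ ρ r :=
  max_le (sub_le_self _ (Real.rpow_nonneg (Nat.cast_nonneg L) _)) hρ

theorem pMinus_nonneg (hζ : 0 ≤ ζ n) : 0 ≤ pMinus L θ ρ ζ n r := by
  rw [pMinus, sub_nonneg, Real.exp_le_one_iff, neg_mul, neg_nonpos]
  exact mul_nonneg (inv_nonneg.2 hζ) rhoMinus_nonneg

theorem pMinus_le_one : pMinus L θ ρ ζ n r ≤ 1 :=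
  sub_le_self _ (Real.exp_nonneg _)

theorem pMinus_le_one_sub_exp (hζ : 0 ≤ ζ n) (hρ : 0 ≤ ρ r) :
    pMinus L θ ρ ζ n r ≤ 1 - Real.exp (-(ζ n)⁻¹ * ρ r) := by
  rw [pMinus, neg_mul, neg_mul]
  gcongr
  exact rhoMinus_le hρ

end pMinus

theorem sum_shell_mul_pMinus_le_one {d L : ℕ} (hL : 1 ≤ L) {θ : ℝ} {ρ : ℝ → ℝ}
    (hρnn : ∀ r : ℝ, 0 ≤ r → 0 ≤ ρ r) {ζ : ℕ → ℝ} {n : ℕ} (hζ : 0 ≤ ζ n)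
    (hz : zetaEq d L ρ n (ζ n)) :
    ∑ i ∈ Icc 1 n, ((L ^ (i * d) - L ^ ((i - 1) * d) : ℕ) : ℝ) * pMinus L θ ρ ζ n ((L : ℝ) ^ i)
      ≤ 1 := by
  rw [← hz.sum_shell_mul_one_sub_exp hL]
  gcongr with i
  exact pMinus_le_one_sub_exp hζ (hρnn _ (by positivity))

theorem exp_moment_W_one_le_general
    (d L : ℕ) (hL : 2 ≤ L)
    (ρ : ℝ → ℝ)
    (hρnn : ∀ r : ℝ, 0 ≤ r → 0 ≤ ρ r)
    (θ : ℝ)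
    (ζ : ℕ → ℝ) (hζpos : ∀ n : ℕ, 1 ≤ n → 0 < ζ n)
    (hζeq : ∀ n : ℕ, 1 ≤ n → zetaEq d L ρ n (ζ n))
    {Ω : Type} [MeasurableSpace Ω] (P : Measure Ω)
    (X : ℕ → ℕ → Ω → ℕ)
    (hXmeas : ∀ n i, Measurable (X n i))
    (hXindep : ∀ n : ℕ, iIndepFun (X n) P)
    (hXdist : ∀ n i : ℕ, 1 ≤ i → i ≤ n → ∀ k : ℕ,
      P {ω | X n i ω = k} =
        ENNReal.ofReal (((L ^ (i * d) - L ^ ((i - 1) * d)).choose k : ℝ) *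
          pMinus L θ ρ ζ n ((L : ℝ) ^ i) ^ k *
          (1 - pMinus L θ ρ ζ n ((L : ℝ) ^ i)) ^ (L ^ (i * d) - L ^ ((i - 1) * d) - k)))
 :
    ∀ n : ℕ, 1 ≤ n →
      (∫⁻ ω, ENNReal.ofReal (Real.exp ((∑ i ∈ Finset.Icc 1 n, X n i ω : ℕ) : ℝ)) ∂P ≤
        ENNReal.ofReal (Real.exp 2)) ∧
      ∀ k : ℕ, 1 ≤ k →
        ∫⁻ ω, ((∑ i ∈ Finset.Icc 1 n, X n i ω : ℕ) : ℝ≥0∞) ^ k ∂P ≤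
          (Nat.factorial k : ℝ≥0∞) * ENNReal.ofReal (Real.exp 2) := by
  intro n hn
  have hζ : 0 ≤ ζ n := (hζpos n hn).le
  have hexp : ∫⁻ ω, ENNReal.ofReal (Real.exp ((∑ i ∈ Icc 1 n, X n i ω : ℕ) : ℝ)) ∂P ≤
      ENNReal.ofReal (Real.exp 2) := by
    refine (lintegral_exp_sum_le_of_iIndepFun_isBinomial (hXmeas n) (hXindep n) (Icc 1 n)
      (fun i hi => hXdist n i (mem_Icc.1 hi).1 (mem_Icc.1 hi).2)
      (fun i _ => pMinus_nonneg hζ) (fun i _ => pMinus_le_one)).trans ?_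
    have hsum := sum_shell_mul_pMinus_le_one (by omega) hρnn (θ := θ) hζ (hζeq n hn)
    have he : 0 ≤ Real.exp 1 - 1 := by linarith [Real.add_one_le_exp (1 : ℝ)]
    gcongr
    linarith [mul_le_of_le_one_right he hsum, Real.exp_one_lt_three]
  exact ⟨hexp, fun k _ =>
    (lintegral_natCast_pow_le_factorial_mul_lintegral_exp P _ k).trans (mul_le_mul_right hexp _)⟩

/-- `E[exp(W₁^{(n)})] ≤ e²` for all `n ≥ 1`, and consequently
`E[(W₁^{(n)})^k] ≤ k! e²` for all `k ≥ 1`. -/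
theorem exp_moment_W_one_le
    (d L : ℕ) (hd : 1 ≤ d) (hL : 2 ≤ L)
    (A1 A2 α : ℝ) (hA1 : 0 < A1) (hA12 : A1 ≤ A2)
    (hα0 : 0 < α) (hαd : α < (d : ℝ))
    (ρ : ℝ → ℝ) (hρ0 : ρ 0 = 0)
    (hρnn : ∀ r : ℝ, 0 ≤ r → 0 ≤ ρ r)
    (hρlb : ∀ r : ℝ, 1 ≤ r → A1 * r ^ (-α) ≤ ρ r)
    (hρub : ∀ r : ℝ, 1 ≤ r → ρ r ≤ A2 * r ^ (-α))
    (θ : ℝ) (hα56 : α < 5 * (d : ℝ) / 6) (hθα : α < θ)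
    (hθ1 : α ≤ (d : ℝ) / 2 → θ < 4 * α / 3)
    (hθ2 : (d : ℝ) / 2 < α → α ≤ 2 * (d : ℝ) / 3 → θ < 2 * α - (d : ℝ) / 2)
    (hθ3 : 2 * (d : ℝ) / 3 < α → θ < 5 * α / 2 - (d : ℝ))
    (ζ : ℕ → ℝ) (hζpos : ∀ n : ℕ, 1 ≤ n → 0 < ζ n)
    (hζeq : ∀ n : ℕ, 1 ≤ n → zetaEq d L ρ n (ζ n))
    {Ω : Type} [MeasurableSpace Ω] (P : Measure Ω) [IsProbabilityMeasure P]
    (X : ℕ → ℕ → Ω → ℕ)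
    (hXmeas : ∀ n i, Measurable (X n i))
    (hXindep : ∀ n : ℕ, iIndepFun (X n) P)
    (hXdist : ∀ n i : ℕ, 1 ≤ i → i ≤ n → ∀ k : ℕ,
      P {ω | X n i ω = k} =
        ENNReal.ofReal (((L ^ (i * d) - L ^ ((i - 1) * d)).choose k : ℝ) *
          pMinus L θ ρ ζ n ((L : ℝ) ^ i) ^ k *
          (1 - pMinus L θ ρ ζ n ((L : ℝ) ^ i)) ^ (L ^ (i * d) - L ^ ((i - 1) * d) - k)))
 :
    ∀ n : ℕ, 1 ≤ n →
      (∫⁻ ω, ENNReal.ofReal (Real.exp ((∑ i ∈ Finset.Icc 1 n, X n i ω : ℕ) : ℝ)) ∂P ≤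
        ENNReal.ofReal (Real.exp 2)) ∧
      ∀ k : ℕ, 1 ≤ k →
        ∫⁻ ω, ((∑ i ∈ Finset.Icc 1 n, X n i ω : ℕ) : ℝ≥0∞) ^ k ∂P ≤
          (Nat.factorial k : ℝ≥0∞) * ENNReal.ofReal (Real.exp 2) :=
  exp_moment_W_one_le_general d L hL ρ hρnn θ ζ hζpos hζeq P X hXmeas hXindep hXdist

end
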